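/- The counit ε of the path face algebra is not an algebra homomorphism in general; rather, ε satisfies the weak multiplicativity ε(fgh) = ε(f g_{(1)}) ε(g_{(2)} h) characteristic of weak bialgebras, verified on the basis elements T^A_B. -/

import Mathlib

/-- A finite oriented graph. -/
structure FGraph where
  V : Type
  E : Type
  [fV : Fintype V]
  [fE : Fintype E]
  [dV : DecidableEq V]
  [dE : DecidableEq E]
  src : E → V
  tgt : E → V

attribute [instance] FGraph.fV FGraph.fE FGraph.dV FGraph.dE

namespace FGraph

variable (G : FGraph)

/-- Validity of a list of edges as a path starting at a given vertex. -/
def valid : G.V → List G.E → Bool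
  | _, [] => true
  | v, e :: l => decide (G.src e = v) && valid (G.tgt e) l

/-- The range (end vertex) of a list of edges starting at a given vertex. -/
def rng : G.V → List G.E → G.V
  | v, [] => v
  | _, e :: l => rng (G.tgt e) l

/-- A path: a starting vertex together with a composable list of edges. -/
def GPath := {p : G.V × List G.E // G.valid p.1 p.2 = true}

instance : DecidableEq G.GPath := by unfold GPath; infer_instance

/-- The source `·P` of a path. -/
def srcP (p : G.GPath) : G.V := p.1.1

/-- The range `P·` of a path. -/
def rngP (p : G.GPath) : G.V := G.rng p.1.1 p.1.2

/-- The length `#P` of a path. -/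
def len (p : G.GPath) : ℕ := p.1.2.length

theorem valid_append : ∀ (l₁ : List G.E) (v : G.V) (l₂ : List G.E),
    G.valid v l₁ = true → G.valid (G.rng v l₁) l₂ = true → G.valid v (l₁ ++ l₂) = true := by
  intro l₁
  induction l₁ with
  | nil => intro v l₂ _ h2; simpa [valid, rng] using h2
  | cons e l ih =>
    intro v l₂ h1 h2
    simp only [valid, Bool.and_eq_true, decide_eq_true_eq, List.cons_append] at h1 ⊢
    exact ⟨h1.1, ih _ _ h1.2 (by simpa [rng] using h2)⟩

/-- Concatenation `P⋅Q` of composable paths. -/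
def comp (p q : G.GPath) (h : G.rngP p = G.srcP q) : G.GPath :=
  ⟨(p.1.1, p.1.2 ++ q.1.2),
    G.valid_append p.1.2 p.1.1 q.1.2 p.2
      (by rw [show G.rng p.1.1 p.1.2 = q.1.1 from h]; exact q.2)⟩

/-- The path of length zero at a vertex. -/
def vert (i : G.V) : G.GPath := ⟨(i, []), rfl⟩

/-- Index set of the basis `T^A_B`: pairs of paths of equal length. -/
def PP := {x : G.GPath × G.GPath // G.len x.1 = G.len x.2}

instance : DecidableEq G.PP := by unfold PP; infer_instance

/-- Paths of length `n`, encoded with vectors (a `Fintype`). -/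
def PathN (n : ℕ) := {q : G.V × List.Vector G.E n // G.valid q.1 q.2.1 = true}

instance (n : ℕ) : Fintype (G.PathN n) := by unfold PathN; infer_instance

/-- The finite set of all paths of length `n`. -/
def pathsLen (n : ℕ) : Finset G.GPath :=
  (Finset.univ : Finset (G.PathN n)).image (fun q => ⟨(q.1.1, q.1.2.1), q.2⟩)

variable (k : Type) [CommRing k]

/-- The path face algebra: the free `k`-module with basis `T^A_B`. -/
abbrev FF := G.PP →₀ k

/-- The basis element `T^A_B`. -/
noncomputable def bT (A B : G.GPath) (h : G.len A = G.len B) : FF G k :=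
  Finsupp.single ⟨(A, B), h⟩ 1

/-- Product of two basis elements:
`T^A_B T^C_D = δ(A·,·C) δ(B·,·D) T^{A⋅C}_{B⋅D}`. -/
noncomputable def mulB (x y : G.PP) : FF G k :=
  if h : G.rngP x.1.1 = G.srcP y.1.1 ∧ G.rngP x.1.2 = G.srcP y.1.2 then
    Finsupp.single ⟨(G.comp x.1.1 y.1.1 h.1, G.comp x.1.2 y.1.2 h.2), by
      have hx := x.2; have hy := y.2
      simp only [len, comp, List.length_append] at *
      omega⟩ 1
  else 0

/-- The product, extended bilinearly to the whole of `F`. -/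
noncomputable def mulL : FF G k →ₗ[k] FF G k →ₗ[k] FF G k :=
  Finsupp.lift (FF G k →ₗ[k] FF G k) k G.PP
    (fun a => Finsupp.lift (FF G k) k G.PP (fun b => G.mulB k a b))

/-- The product as a binary operation. -/
noncomputable def mulF (x y : FF G k) : FF G k := G.mulL k x y

/-- The unit `1 = Σ_{i,j vertices} T^i_j`. -/
noncomputable def oneF : FF G k := ∑ i : G.V, ∑ j : G.V, G.bT k (G.vert i) (G.vert j) rfl

theorem len_mem_pathsLen {n : ℕ} {p : G.GPath} (hp : p ∈ G.pathsLen n) : G.len p = n := by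
  obtain ⟨q, -, rfl⟩ := Finset.mem_image.mp hp
  exact q.1.2.2

open TensorProduct in
/-- Coproduct on a basis element: `Δ(T^A_B) = Σ_{A' : #A' = #A} T^A_{A'} ⊗ T^{A'}_B`. -/
noncomputable def ΔB (a : G.PP) : TensorProduct k (FF G k) (FF G k) :=
  ∑ A' ∈ (G.pathsLen (G.len a.1.1)).attach,
    (Finsupp.single ⟨(a.1.1, A'.1), (G.len_mem_pathsLen A'.2).symm⟩ (1 : k)) ⊗ₜ[k]
      (Finsupp.single ⟨(A'.1, a.1.2), (G.len_mem_pathsLen A'.2).trans a.2⟩ (1 : k))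

/-- The coproduct, extended linearly. -/
noncomputable def ΔL : FF G k →ₗ[k] TensorProduct k (FF G k) (FF G k) :=
  Finsupp.lift _ k G.PP (G.ΔB k)

/-- The counit `ε(T^A_B) = δ_{A B}`, extended linearly. -/
noncomputable def εL : FF G k →ₗ[k] k :=
  Finsupp.lift k k G.PP (fun a => if a.1.1 = a.1.2 then 1 else 0)

end FGraph


namespace FGraph

variable (G : FGraph) (k : Type) [CommRing k]

theorem mulF_single_single (a b : G.PP) :
    G.mulF k (Finsupp.single a 1) (Finsupp.single b 1) = G.mulB k a b := by
  simp [mulF, mulL, Finsupp.lift_apply, Finsupp.sum_single_index]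

theorem eL_single (a : G.PP) (c : k) :
    G.εL k (Finsupp.single a c) = if a.1.1 = a.1.2 then c else 0 := by
  simp [εL, Finsupp.lift_apply, Finsupp.sum_single_index, smul_ite]

theorem rng_append : ∀ (l₁ : List G.E) (v : G.V) (l₂ : List G.E),
    G.rng v (l₁ ++ l₂) = G.rng (G.rng v l₁) l₂ := by
  intro l₁
  induction l₁ with
  | nil => intro v l₂; rfl
  | cons e l ih => intro v l₂; simp [rng, ih]

theorem rngP_comp (p q : G.GPath) (h : G.rngP p = G.srcP q) :
    G.rngP (G.comp p q h) = G.rngP q := by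
  show G.rng p.1.1 (p.1.2 ++ q.1.2) = _
  rw [G.rng_append]
  rw [show G.rng p.1.1 p.1.2 = q.1.1 from h]
  rfl

theorem comp_inj {p p' q q' : G.GPath} (hl : G.len p = G.len p')
    (h : G.rngP p = G.srcP q) (h' : G.rngP p' = G.srcP q')
    (he : G.comp p q h = G.comp p' q' h') : p = p' ∧ q = q' := by
  have h1 : p.1.1 = p'.1.1 := congrArg (fun x => x.1.1) he
  have h2 : p.1.2 ++ q.1.2 = p'.1.2 ++ q'.1.2 := congrArg (fun x => x.1.2) he
  have h3 := List.append_inj h2 hl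
  constructor
  · exact Subtype.ext (Prod.ext h1 h3.1)
  · refine Subtype.ext (Prod.ext ?_ h3.2)
    have : q.1.1 = G.rng p.1.1 p.1.2 := h.symm
    have : q'.1.1 = G.rng p'.1.1 p'.1.2 := h'.symm
    rw [‹q.1.1 = _›, ‹q'.1.1 = _›, h1, h3.1]

theorem mem_pathsLen_self (p : G.GPath) : p ∈ G.pathsLen (G.len p) := by
  exact Finset.mem_image.mpr ⟨⟨(p.1.1, ⟨p.1.2, rfl⟩), p.2⟩, Finset.mem_univ _, rfl⟩

theorem eL_mulB (x y : G.PP) :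
    G.εL k (G.mulB k x y) =
      if h : G.rngP x.1.1 = G.srcP y.1.1 ∧ G.rngP x.1.2 = G.srcP y.1.2 then
        (if G.comp x.1.1 y.1.1 h.1 = G.comp x.1.2 y.1.2 h.2 then (1 : k) else 0) else 0 := by
  unfold mulB
  split
  · exact G.eL_single k _ _
  · exact map_zero _

theorem mulF_single_single' (a b : {x : G.GPath × G.GPath // G.len x.1 = G.len x.2}) :
    G.mulF k (Finsupp.single (α := G.PP) a 1) (Finsupp.single (α := G.PP) b 1) = G.mulB k a b :=
  G.mulF_single_single k a b

theorem eL_single' (a : {x : G.GPath × G.GPath // G.len x.1 = G.len x.2}) (c : k) :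
    G.εL k (Finsupp.single (α := G.PP) a c) = if a.1.1 = a.1.2 then c else 0 :=
  G.eL_single k a c

theorem eL_mulB' (x y : {x : G.GPath × G.GPath // G.len x.1 = G.len x.2}) :
    G.εL k (G.mulB k x y) =
      if h : G.rngP x.1.1 = G.srcP y.1.1 ∧ G.rngP x.1.2 = G.srcP y.1.2 then
        (if G.comp x.1.1 y.1.1 h.1 = G.comp x.1.2 y.1.2 h.2 then (1 : k) else 0) else 0 :=
  G.eL_mulB k x y

theorem mulB_pos (x y : G.PP) (h : G.rngP x.1.1 = G.srcP y.1.1 ∧ G.rngP x.1.2 = G.srcP y.1.2)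
    (hl : G.len (G.comp x.1.1 y.1.1 h.1) = G.len (G.comp x.1.2 y.1.2 h.2)) :
    G.mulB k x y = Finsupp.single ⟨(G.comp x.1.1 y.1.1 h.1, G.comp x.1.2 y.1.2 h.2), hl⟩ 1 := by
  rw [mulB, dif_pos h]

theorem len_comp (p q : G.GPath) (h : G.rngP p = G.srcP q) :
    G.len (G.comp p q h) = G.len p + G.len q := by
  simp [len, comp]

end FGraph

open FGraph in
/-- the counit of the path face algebra is not an algebra homomorphism
in general — there exist graphs and basis elements with
`ε(T^A_B T^C_D) ≠ ε(T^A_B) ε(T^C_D)` — but it satisfies the weak multiplicativity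
`ε(fgh) = Σ ε(f g_{(1)}) ε(g_{(2)} h)` (with `Δ(g) = Σ_{G'} T^{g₁}_{G'} ⊗ T^{G'}_{g₂}`),
verified on the basis elements `T^A_B`. -/
theorem counit_weak_multiplicativity (k : Type) [Field k] :
    (∃ (G : FGraph) (a b : G.PP),
      G.εL k (G.mulF k (Finsupp.single a (1 : k)) (Finsupp.single b (1 : k)))
        ≠ G.εL k (Finsupp.single a (1 : k)) * G.εL k (Finsupp.single b (1 : k))) ∧
    (∀ (G : FGraph) (f g h : G.PP),
      G.εL k (G.mulF k (G.mulF k (Finsupp.single f (1 : k)) (Finsupp.single g (1 : k)))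
          (Finsupp.single h (1 : k)))
        = ∑ B' ∈ (G.pathsLen (G.len g.1.1)).attach,
            G.εL k (G.mulF k (Finsupp.single f (1 : k))
                (Finsupp.single ⟨(g.1.1, B'.1), (G.len_mem_pathsLen B'.2).symm⟩ (1 : k)))
              * G.εL k (G.mulF k
                  (Finsupp.single ⟨(B'.1, g.1.2), (G.len_mem_pathsLen B'.2).trans g.2⟩ (1 : k))
                  (Finsupp.single h (1 : k)))) := by
  constructor
  · classical
    set G₀ : FGraph := { V := Bool, E := Empty, src := Empty.elim, tgt := Empty.elim } with hG
    refine ⟨G₀, ⟨(G₀.vert false, G₀.vert false), rfl⟩, ⟨(G₀.vert true, G₀.vert true), rfl⟩, ?_⟩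
    rw [mulF_single_single', eL_mulB', eL_single', eL_single']
    rw [dif_neg (by simp [rngP, srcP, vert, rng])]
    simp
  · intro G f g h
    obtain ⟨⟨f₁, f₂⟩, hf⟩ := f
    obtain ⟨⟨g₁, g₂⟩, hg⟩ := g
    obtain ⟨⟨h₁, h₂⟩, hh⟩ := h
    have hf' : G.len f₁ = G.len f₂ := hf
    have hg' : G.len g₁ = G.len g₂ := hg
    have hh' : G.len h₁ = G.len h₂ := hh
    simp only [mulF_single_single, mulF_single_single']
    rw [Finset.sum_eq_single_of_mem (⟨g₁, G.mem_pathsLen_self g₁⟩ :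
          {x // x ∈ G.pathsLen (G.len (⟨(g₁, g₂), hg⟩ : G.PP).1.1)})
        (Finset.mem_attach _ _) ?vanish]
    case vanish =>
      -- vanishing of terms with B' ≠ g₁
      intro B' _ hne
      have hB : B'.1 ≠ g₁ := fun e => hne (Subtype.ext e)
      rw [eL_mulB']
      split_ifs with hc hce
      · exact absurd (G.comp_inj hf' hc.1 hc.2 hce).2 hB.symm
      · exact zero_mul _
      · exact zero_mul _
    -- main equality at B' = g₁
    by_cases df : G.rngP f₁ = G.srcP g₁ ∧ G.rngP f₂ = G.srcP g₂
    · have hlen : G.len (G.comp f₁ g₁ df.1) = G.len (G.comp f₂ g₂ df.2) := by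
        rw [len_comp, len_comp, hf', hg']
      rw [G.mulB_pos k ⟨(f₁, f₂), hf⟩ ⟨(g₁, g₂), hg⟩ df hlen, mulF_single_single', eL_mulB', eL_mulB', eL_mulB']
      by_cases Q : f₁ = f₂ ∧ g₁ = g₂ ∧ h₁ = h₂ ∧ G.rngP g₁ = G.srcP h₁ ∧ G.rngP g₂ = G.srcP h₂
      · obtain ⟨e1, e2, e3, q4, q5⟩ := Q
        subst e1; subst e2; subst e3
        rw [dif_pos ⟨(G.rngP_comp _ _ df.1).trans q4, (G.rngP_comp _ _ df.2).trans q5⟩,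
          if_pos rfl,
          dif_pos ⟨df.1, df.2⟩, if_pos rfl,
          dif_pos ⟨q4, q5⟩, if_pos rfl]
        norm_num
      · trans (0 : k)
        · split_ifs with hdc hce
          · exfalso
            obtain ⟨ea, eb⟩ := G.comp_inj (by rw [len_comp, len_comp, hf', hg']) hdc.1 hdc.2 hce
            obtain ⟨e1, e2⟩ := G.comp_inj hf' df.1 df.2 ea
            exact Q ⟨e1, e2, eb, (G.rngP_comp f₁ g₁ df.1).symm.trans hdc.1,
              (G.rngP_comp f₂ g₂ df.2).symm.trans hdc.2⟩
          · rfl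
          · rfl
        · symm
          split_ifs with hc1 hce1 hc2 hce2 <;> try ring_nf
          exfalso
          have e1 := (G.comp_inj hf' hc1.1 hc1.2 hce1).1
          obtain ⟨e2, e3⟩ := G.comp_inj hg' hc2.1 hc2.2 hce2
          exact Q ⟨e1, e2, e3, hc2.1, hc2.2⟩
    · have h0 : G.mulB k ⟨(f₁, f₂), hf⟩ ⟨(g₁, g₂), hg⟩ = 0 := dif_neg df
      rw [h0]
      simp only [mulF, map_zero, LinearMap.zero_apply]
      rw [eL_mulB', eL_mulB']
      symm
      split_ifs with hc1 hce1 hc2 hce2 <;> try ring_nf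
      exfalso
      have e1 := (G.comp_inj hf' hc1.1 hc1.2 hce1).1
      obtain ⟨e2, e3⟩ := G.comp_inj hg' hc2.1 hc2.2 hce2
      exact df ⟨hc1.1, by rw [← e2]; exact hc1.2⟩
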